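/- Let C be an (n,k) MDS linear code over F with systematic generator matrix G = [I_k | P]. Let G' = [I_k | P'] be obtained from G by replacing an arbitrary set of δ entries of P by 0, where 0 ≤ δ ≤ n − k, and let C' be the row space of G'. Then d_min(C') ≥ n − k + 1 − δ. -/

import Mathlib

open Matrix

/-- The minimum Hamming distance of a linear code: the minimum Hamming weight of a
nonzero codeword. -/
noncomputable def dmin {F : Type*} [Field F] [DecidableEq F] {ι : Type*} [Fintype ι]
    (C : Submodule F (ι → F)) : ℕ :=
  sInf {d | ∃ x ∈ C, x ≠ 0 ∧ hammingNorm x = d}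

/-- The row space of a matrix, i.e. the linear code generated by its rows. -/
def rowSpace {F : Type*} [Field F] {κ ι : Type*} (G : Matrix κ ι F) :
    Submodule F (ι → F) :=
  Submodule.span F (Set.range fun i => G i)

/-- The systematic generator matrix `[I_k | P]`. -/
def sysGen {F : Type*} [Field F] [DecidableEq F] {k m : ℕ}
    (P : Matrix (Fin k) (Fin m) F) : Matrix (Fin k) (Fin k ⊕ Fin m) F :=
  Matrix.fromCols 1 P

lemma mem_rowSpace_iff {F : Type*} [Field F] {κ ι : Type*} [Fintype κ] (G : Matrix κ ι F)
    (x : ι → F) : x ∈ rowSpace G ↔ ∃ v, x = v ᵥ* G := by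
  rw [rowSpace, show (Set.range fun i => G i) = Set.range G.row from rfl, ← range_vecMulLinear]
  constructor
  · rintro ⟨v, rfl⟩; exact ⟨v, rfl⟩
  · rintro ⟨v, rfl⟩; exact ⟨v, rfl⟩

lemma vecMul_sysGen {F : Type*} [Field F] [DecidableEq F] {k m : ℕ}
    (P : Matrix (Fin k) (Fin m) F) (v : Fin k → F) :
    v ᵥ* sysGen P = Sum.elim v (v ᵥ* P) := by
  rw [sysGen, Matrix.vecMul_fromCols, Matrix.vecMul_one]

lemma hammingNorm_le_of_support {F : Type*} [Field F] [DecidableEq F] {ι : Type*}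
    [Fintype ι] [DecidableEq ι] (x : ι → F) (S : Finset ι) (h : ∀ i, x i ≠ 0 → i ∈ S) :
    hammingNorm x ≤ S.card := by
  classical
  exact Finset.card_le_card (fun i hi => h i (by simpa using hi))

/-- Zeroing an arbitrary set of `δ` entries of the parity part `P` of a systematic
MDS generator matrix gives a code `C'` with `d_min(C') ≥ n − k + 1 − δ`. -/
theorem dmin_zeroed_arbitrary_entries_ge {F : Type*} [Field F] [DecidableEq F]
    {k m : ℕ} (P : Matrix (Fin k) (Fin m) F)
    (hMDS : dmin (rowSpace (sysGen P)) = m + 1)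
    (E : Finset (Fin k × Fin m)) (hE : E.card ≤ m) :
    let P' : Matrix (Fin k) (Fin m) F :=
      fun r c => if (r, c) ∈ E then 0 else P r c
    m + 1 - E.card ≤ dmin (rowSpace (sysGen P')) := by
  intro P'
  -- k = 0 case: hMDS is contradictory
  rcases Nat.eq_zero_or_pos k with hk | hk
  · exfalso
    subst hk
    have : dmin (rowSpace (sysGen P)) = 0 := by
      rw [dmin]
      convert Nat.sInf_empty
      ext d
      simp only [Set.mem_setOf_eq, Set.mem_empty_iff_false, iff_false]
      rintro ⟨x, hx, hne, -⟩
      apply hne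
      have : x ∈ rowSpace (sysGen P) := hx
      rw [mem_rowSpace_iff] at this
      obtain ⟨v, rfl⟩ := this
      have hv : v = 0 := Subsingleton.elim _ _
      simp [hv]
    omega
  -- main case: every nonzero codeword of C' has weight ≥ m+1 - E.card
  rw [dmin]
  apply le_csInf
  · -- nonempty: row 0
    refine ⟨hammingNorm (sysGen P' ⟨0, hk⟩), sysGen P' ⟨0, hk⟩, ?_, ?_, rfl⟩
    · exact Submodule.subset_span ⟨⟨0, hk⟩, rfl⟩
    · intro h0
      have : sysGen P' ⟨0, hk⟩ (Sum.inl ⟨0, hk⟩) = 0 := congrFun h0 _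
      simp [sysGen, Matrix.fromCols, Matrix.one_apply] at this
  · rintro d ⟨x, hx, hne, rfl⟩
    rw [mem_rowSpace_iff] at hx
    obtain ⟨v, rfl⟩ := hx
    have hv : v ≠ 0 := by
      rintro rfl; exact hne (by simp [vecMul_sysGen])
    -- the corresponding codeword in C
    have hx_mem : (v ᵥ* sysGen P) ∈ rowSpace (sysGen P) :=
      (mem_rowSpace_iff _ _).2 ⟨v, rfl⟩
    have hx_ne : v ᵥ* sysGen P ≠ 0 := by
      intro h0
      apply hv
      ext i
      have := congrFun h0 (Sum.inl i)
      rwa [vecMul_sysGen] at this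
    have hwx : m + 1 ≤ hammingNorm (v ᵥ* sysGen P) := by
      rw [← hMDS, dmin]
      exact Nat.sInf_le ⟨_, hx_mem, hx_ne, rfl⟩
    -- difference bound
    have hdiff : hammingNorm (v ᵥ* sysGen P - v ᵥ* sysGen P') ≤ E.card := by
      calc hammingNorm (v ᵥ* sysGen P - v ᵥ* sysGen P')
          ≤ ((E.image Prod.snd).image Sum.inr).card := by
            apply hammingNorm_le_of_support
            intro j hj
            rw [vecMul_sysGen, vecMul_sysGen] at hj
            rcases j with i | c
            · simp at hj
            · simp only [Finset.mem_image]
              refine ⟨c, ?_, rfl⟩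
              simp only [Sum.elim_inr, Pi.sub_apply] at hj
              by_contra hc
              apply hj
              have hPc : ∀ r, P' r c = P r c := by
                intro r
                have hrc : (r, c) ∉ E := fun h => hc ⟨(r, c), h, rfl⟩
                simp [P', hrc]
              rw [sub_eq_zero]
              simp [Matrix.vecMul, dotProduct, hPc]
        _ ≤ (E.image Prod.snd).card := Finset.card_image_le
        _ ≤ E.card := Finset.card_image_le
    -- triangle inequality
    have htri : hammingNorm (v ᵥ* sysGen P) ≤
        hammingNorm (v ᵥ* sysGen P - v ᵥ* sysGen P') + hammingNorm (v ᵥ* sysGen P') := by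
      calc hammingNorm (v ᵥ* sysGen P) = hammingDist (v ᵥ* sysGen P) 0 := by
            rw [hammingDist_zero_right]
        _ ≤ hammingDist (v ᵥ* sysGen P) (v ᵥ* sysGen P') + hammingDist (v ᵥ* sysGen P') 0 :=
            hammingDist_triangle _ _ _
        _ = _ := by rw [hammingDist_comm, hammingDist_eq_hammingNorm, hammingDist_zero_right, neg_add_eq_sub]
    omega
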